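/- Let T : ℓ²(ℤ) → ℓ²(ℤ) be a bilateral weighted shift with weight sequence (w_n)_{n∈ℤ}. The following are equivalent: (i) T is topologically multiply recurrent; (ii) for every m ∈ ℕ the operator T ⊕ T² ⊕ ⋯ ⊕ T^m is hypercyclic on (ℓ²(ℤ))^m; (iii) for every m ∈ ℕ the operators T, T², …, T^m are densely d-hypercyclic; (iv) for every m, q ∈ ℕ and every ε > 0 there exists a positive integer n = n(m, q, ε) such that for every integer j with |j| ≤ q and every l = 1, …, m one has ∏_{i=1}^{ln} w_{j+i} > 1/ε and ∏_{i=0}^{ln−1} w_{j−i} < ε. -/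

import Mathlib

open Filter Topology

/-- Topological multiple recurrence for an operator. -/
def TopMultiplyRecurrent {X : Type*} [NormedAddCommGroup X] [NormedSpace ℂ X]
    (T : X →L[ℂ] X) : Prop :=
  ∀ U : Set X, IsOpen U → U.Nonempty → ∀ m : ℕ, 0 < m →
    ∃ k : ℕ, 0 < k ∧
      (⋂ j ∈ Finset.range (m + 1), (T ^ (j * k) : X →L[ℂ] X) ⁻¹' U).Nonempty

/-- The direct sum `T ⊕ T² ⊕ ⋯ ⊕ T^m` acting on `X^m`. -/
noncomputable def directSumPowers {X : Type*} [NormedAddCommGroup X] [NormedSpace ℂ X]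
    (T : X →L[ℂ] X) (m : ℕ) : (Fin m → X) →L[ℂ] (Fin m → X) :=
  ContinuousLinearMap.pi fun i : Fin m =>
    (T ^ ((i : ℕ) + 1)).comp (ContinuousLinearMap.proj i)

set_option synthInstance.maxHeartbeats 1000000
set_option maxHeartbeats 2000000
set_option maxRecDepth 8000

noncomputable section
namespace Stmt10Aux

abbrev X := lp (fun _ : ℤ => ℂ) 2

noncomputable def e (j : ℤ) : X := lp.single 2 j (1 : ℂ)

def pB (w : ℤ → ℝ) (j : ℤ) (N : ℕ) : ℝ := ∏ i ∈ Finset.range N, w (j - (i : ℤ))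

lemma e_apply (j i : ℤ) : (e j : ∀ _ : ℤ, ℂ) i = if i = j then 1 else 0 := by
  by_cases h : i = j
  · subst h; simp [e, lp.single_apply_self]
  · simp [e, lp.single_apply_ne _ _ _ h, h]

lemma norm_e (j : ℤ) : ‖e j‖ = 1 := by
  have := lp.norm_single (p := 2) (E := fun _ : ℤ => ℂ) (by norm_num) j (1:ℂ)
  simpa [e] using this

lemma norm_apply_le (x : X) (i : ℤ) : ‖(x : ∀ _ : ℤ, ℂ) i‖ ≤ ‖x‖ :=
  lp.norm_apply_le_norm (by norm_num) x i

instance : Nontrivial X := by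
  refine ⟨e 0, 0, fun h => ?_⟩
  have := congrFun (congrArg (fun (x : X) => (x : ∀ _ : ℤ, ℂ)) h) 0
  simp [e_apply] at this

lemma pB_pos {w : ℤ → ℝ} (hw : ∀ n, 0 < w n) (j : ℤ) (N : ℕ) : 0 < pB w j N :=
  Finset.prod_pos fun _ _ => hw _

lemma pB_add (w : ℤ → ℝ) (j : ℤ) (A B : ℕ) :
    pB w j (A + B) = pB w j A * pB w (j - A) B := by
  unfold pB
  rw [Finset.prod_range_add]
  congr 1
  refine Finset.prod_congr rfl fun i _ => ?_
  congr 1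
  push_cast
  ring

lemma pB_eq_forward (w : ℤ → ℝ) (j : ℤ) (N : ℕ) :
    pB w (j + N) N = ∏ i ∈ Finset.Icc 1 N, w (j + (i : ℤ)) := by
  rw [← Finset.Ico_add_one_right_eq_Icc, Finset.prod_Ico_eq_prod_range]
  unfold pB
  rw [← Finset.prod_range_reflect]
  refine Finset.prod_congr rfl fun i hi => ?_
  simp only [Finset.mem_range] at hi
  congr 1
  have : (1:ℤ) ≤ N - i := by omega
  push_cast [Nat.cast_sub (by omega : i + 1 ≤ N)] <;> try ring
  omega

lemma single_eq_smul (j : ℤ) (c : ℂ) : lp.single 2 j c = c • e j := by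
  rw [e, ← lp.single_smul]; norm_num

lemma norm_fsum_le (s : Finset ℤ) (c : ℤ → ℂ) :
    ‖∑ j ∈ s, (c j) • e j‖ ≤ ∑ j ∈ s, ‖c j‖ := by
  refine (norm_sum_le _ _).trans (le_of_eq (Finset.sum_congr rfl fun j _ => ?_))
  rw [norm_smul, norm_e, mul_one]

/-- truncation approximates -/
lemma exists_trunc (x : X) (ε : ℝ) (hε : 0 < ε) :
    ∃ q0 : ℕ, ∀ q : ℕ, q0 ≤ q →
      ‖x - ∑ j ∈ Finset.Icc (-(q:ℤ)) q, ((x : ∀ _ : ℤ, ℂ) j) • e j‖ < ε := by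
  have hsum : HasSum (fun i : ℤ => lp.single 2 i ((x : ∀ _ : ℤ, ℂ) i)) x :=
    lp.hasSum_single (by norm_num) x
  rw [HasSum] at hsum
  have := Metric.tendsto_nhds.mp hsum ε hε
  rw [SummationFilter.unconditional_filter, Filter.eventually_atTop] at this
  obtain ⟨s₀, hs₀⟩ := this
  refine ⟨s₀.sup (fun j => j.natAbs), fun q hq => ?_⟩
  have hsub : s₀ ⊆ Finset.Icc (-(q:ℤ)) q := by
    intro j hj
    have : j.natAbs ≤ q := le_trans (Finset.le_sup hj) hq
    simp only [Finset.mem_Icc]; omega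
  have := hs₀ _ hsub
  rw [dist_eq_norm] at this
  rw [← norm_neg]
  simp only [neg_sub]
  refine lt_of_le_of_lt (le_of_eq ?_) this
  congr 1
  rw [sub_left_inj]
  exact (Finset.sum_congr rfl fun j _ => (single_eq_smul j _).symm)

instance : TopologicalSpace.SeparableSpace X := by
  obtain ⟨u, hu⟩ := TopologicalSpace.exists_dense_seq ℂ
  refine ⟨⟨Set.range (fun p : Finset (ℤ × ℕ) => ∑ q ∈ p, (u q.2) • e q.1),
    Set.countable_range _, ?_⟩⟩
  rw [Metric.dense_iff]
  intro x r hr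
  obtain ⟨q0, hq0⟩ := exists_trunc x (r/2) (by linarith)
  set q := max q0 1 with hqdef
  have hxt := hq0 q (le_max_left _ _)
  set s := Finset.Icc (-(q:ℤ)) q with hs
  have hcard : (0:ℝ) < s.card + 1 := by positivity
  have hchoice : ∀ j : ℤ, ∃ k : ℕ, ‖(x : ∀ _ : ℤ, ℂ) j - u k‖ < r / (2 * (s.card + 1)) := by
    intro j
    obtain ⟨k, hk⟩ := hu.exists_dist_lt ((x : ∀ _ : ℤ, ℂ) j)
      (show (0:ℝ) < r / (2 * (s.card + 1)) by positivity)
    exact ⟨k, by rwa [dist_eq_norm] at hk⟩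
  choose k hk using hchoice
  refine ⟨∑ q ∈ s.image (fun j => (j, k j)), (u q.2) • e q.1, ?_, Set.mem_range_self _⟩
  rw [Metric.mem_ball, dist_eq_norm, norm_sub_rev]
  have himg : ∑ p ∈ s.image (fun j => (j, k j)), (u p.2) • e p.1
      = ∑ j ∈ s, (u (k j)) • e j := by
    rw [Finset.sum_image]
    intro a _ b _ hab
    exact (Prod.mk.injEq _ _ _ _ ▸ hab).1
  rw [himg]
  have h1 : x - ∑ j ∈ s, (u (k j)) • e j
      = (x - ∑ j ∈ s, ((x : ∀ _ : ℤ, ℂ) j) • e j)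
        + ∑ j ∈ s, (((x : ∀ _ : ℤ, ℂ) j) - u (k j)) • e j := by
    have hd : ∑ j ∈ s, (((x : ∀ _ : ℤ, ℂ) j) - u (k j)) • e j
        = ∑ j ∈ s, ((x : ∀ _ : ℤ, ℂ) j) • e j - ∑ j ∈ s, (u (k j)) • e j := by
      rw [← Finset.sum_sub_distrib]
      exact Finset.sum_congr rfl fun j _ => sub_smul _ _ _
    rw [hd]; abel
  rw [h1]
  refine lt_of_le_of_lt (norm_add_le _ _) ?_
  have h2 : ‖∑ j ∈ s, (((x : ∀ _ : ℤ, ℂ) j) - u (k j)) • e j‖ ≤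
      ∑ j ∈ s, ‖((x : ∀ _ : ℤ, ℂ) j) - u (k j)‖ := norm_fsum_le s _
  have h3 : ∑ j ∈ s, ‖((x : ∀ _ : ℤ, ℂ) j) - u (k j)‖ ≤ s.card * (r / (2 * (s.card + 1))) := by
    refine le_trans (Finset.sum_le_card_nsmul s _ _ fun j _ => (hk j).le) ?_
    simp [nsmul_eq_mul]
  have h4 : (s.card : ℝ) * (r / (2 * (s.card + 1))) ≤ r / 2 := by
    calc (s.card : ℝ) * (r / (2 * (s.card + 1)))
        ≤ ((s.card : ℝ) + 1) * (r / (2 * (s.card + 1))) := by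
          refine mul_le_mul_of_nonneg_right (by linarith) (by positivity)
      _ = r/2 * (((s.card : ℝ) + 1)/((s.card : ℝ) + 1)) := by
          field_simp
      _ = r/2 := by rw [div_self (by positivity)]; ring
  linarith [hxt, le_trans h2 h3]

/-- evaluation at a coordinate as a CLM -/
def ev (j : ℤ) : X →L[ℂ] ℂ :=
  LinearMap.mkContinuous
    { toFun := fun y => (y : ∀ _ : ℤ, ℂ) j
      map_add' := fun a b => rfl
      map_smul' := fun c a => rfl } 1
    (fun y => by show ‖(y : ∀ _ : ℤ, ℂ) j‖ ≤ 1 * ‖y‖; simpa using lp.norm_apply_le_norm (by norm_num) y j)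

lemma ev_apply (j : ℤ) (y : X) : ev j y = (y : ∀ _ : ℤ, ℂ) j := rfl

variable {w : ℤ → ℝ} {T : X →L[ℂ] X}
  (hT : ∀ n : ℤ, T (lp.single 2 n (1 : ℂ)) = (w n : ℂ) • lp.single 2 (n - 1) (1 : ℂ))

include hT in
lemma Tpow_e (N : ℕ) (j : ℤ) : (T ^ N) (e j) = (pB w j N : ℂ) • e (j - N) := by
  induction N generalizing j with
  | zero => simp [pB]
  | succ N ih =>
    have h1 : T ^ (N + 1) = (T ^ N) * T := by rw [pow_succ]
    have hTe : T (e j) = (w j : ℂ) • e (j - 1) := hT j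
    rw [h1, ContinuousLinearMap.mul_apply, hTe, map_smul, ih, smul_smul]
    have hp : pB w j (N + 1) = w j * pB w (j - 1) N := by
      unfold pB
      rw [Finset.prod_range_succ' (fun i : ℕ => w (j - (i : ℤ))) N]
      simp only [Nat.cast_zero, sub_zero]
      rw [mul_comm]
      congr 1
      exact Finset.prod_congr rfl fun i _ => by congr 1; omega
    rw [hp]
    push_cast
    congr 1
    congr 1; push_cast; ring

include hT in
lemma Tpow_apply (N : ℕ) (x : X) (j : ℤ) :
    ((T ^ N) x : ∀ _ : ℤ, ℂ) j = (pB w (j + N) N : ℂ) * (x : ∀ _ : ℤ, ℂ) (j + N) := by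
  have hsum : HasSum (fun i : ℤ => lp.single 2 i ((x : ∀ _ : ℤ, ℂ) i)) x :=
    lp.hasSum_single (by norm_num) x
  have h2 : HasSum (fun i : ℤ => (T ^ N) (lp.single 2 i ((x : ∀ _ : ℤ, ℂ) i))) ((T ^ N) x) :=
    (T ^ N).hasSum hsum
  have h3 := (ev j).hasSum h2
  have h4 : HasSum (fun i : ℤ =>
      ((x : ∀ _ : ℤ, ℂ) i * (pB w i N : ℂ)) * (if i = j + N then 1 else 0))
      (((T ^ N) x : ∀ _ : ℤ, ℂ) j) := by
    refine HasSum.congr_fun h3 fun i => ?_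
    rw [ev_apply]
    have : lp.single 2 i ((x : ∀ _ : ℤ, ℂ) i) = ((x : ∀ _ : ℤ, ℂ) i) • e i := by
      rw [e, ← lp.single_smul]; norm_num
    rw [this, map_smul, Tpow_e hT]
    simp only [smul_smul]
    rw [lp.coeFn_smul, Pi.smul_apply, e_apply]
    simp only [smul_eq_mul]
    congr 1
    by_cases h : i = j + N
    · rw [if_pos h, if_pos (by omega : j = i - N)]
    · rw [if_neg h, if_neg (by omega : ¬ j = i - N)]
  have h5 : HasSum (fun i : ℤ =>
      ((x : ∀ _ : ℤ, ℂ) i * (pB w i N : ℂ)) * (if i = j + N then 1 else 0))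
      (((x : ∀ _ : ℤ, ℂ) (j + N) * (pB w (j + N) N : ℂ))) := by
    have := hasSum_ite_eq (j + N) (((x : ∀ _ : ℤ, ℂ) (j + N) * (pB w (j + N) N : ℂ)))
    refine this.congr_fun fun i => ?_
    by_cases h : i = j + N
    · simp [h]
    · simp [h, Ne.symm h]
  rw [h4.unique h5]; ring


/-- tail of a dense sequence in a nontrivial normed space is dense -/
lemma dense_tail {Y : Type*} [NormedAddCommGroup Y] [NormedSpace ℂ Y] [Nontrivial Y]
    {f : ℕ → Y} (hf : Dense (Set.range f)) (N : ℕ) :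
    Dense (Set.range fun n => f (n + N)) := by
  haveI : ∀ y : Y, (𝓝[≠] y).NeBot := fun y => Module.punctured_nhds_neBot ℂ Y y
  have hfin : (f '' Set.Iio N).Finite := (Set.finite_Iio N).image f
  have hd : Dense (Set.range f \ f '' Set.Iio N) := hf.diff_finite hfin
  refine hd.mono fun y hy => ?_
  obtain ⟨⟨n, rfl⟩, hn⟩ := hy
  rcases le_or_gt N n with h | h
  · exact ⟨n - N, by show f (n - N + N) = f n; rw [Nat.sub_add_cancel h]⟩
  · exact absurd ⟨n, h, rfl⟩ hn

lemma directSumPowers_pow_apply {X : Type*} [NormedAddCommGroup X] [NormedSpace ℂ X]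
    (T : X →L[ℂ] X) (m : ℕ) (n : ℕ) (v : Fin m → X) (i : Fin m) :
    ((directSumPowers T m ^ n) v) i = (T ^ (((i : ℕ) + 1) * n)) (v i) := by
  induction n with
  | zero => simp
  | succ n ih =>
    have h1 : directSumPowers T m ^ (n + 1) = directSumPowers T m * directSumPowers T m ^ n := by
      rw [pow_succ']
    rw [h1, ContinuousLinearMap.mul_apply]
    have h2 : (directSumPowers T m ((directSumPowers T m ^ n) v)) i
        = (T ^ ((i : ℕ) + 1)) (((directSumPowers T m ^ n) v) i) := rfl
    rw [h2, ih, ← ContinuousLinearMap.mul_apply, ← pow_add]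
    congr 2
    ring

/-- the reference vector with 1's in the window `[-q,q]` -/
def avec (q : ℕ) : X := ∑ j ∈ Finset.Icc (-(q:ℤ)) q, e j

lemma avec_apply (q : ℕ) (i : ℤ) :
    (avec q : ∀ _ : ℤ, ℂ) i = if |i| ≤ (q:ℤ) then 1 else 0 := by
  unfold avec
  rw [lp.coeFn_sum, Finset.sum_apply]
  by_cases h : |i| ≤ (q:ℤ)
  · have h' := abs_le.mp h
    rw [if_pos h, Finset.sum_eq_single i]
    · rw [e_apply, if_pos rfl]
    · intro b _ hb; rw [e_apply, if_neg (Ne.symm hb)]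
    · intro hi; exfalso; apply hi; simp only [Finset.mem_Icc]; omega
  · rw [if_neg h]
    rw [abs_le] at h
    refine Finset.sum_eq_zero fun b hb => ?_
    simp only [Finset.mem_Icc] at hb
    rw [e_apply, if_neg (by rintro rfl; omega)]

lemma coord_close {x y : X} {δ : ℝ} (h : ‖x - y‖ < δ) (i : ℤ) :
    ‖(x : ∀ _ : ℤ, ℂ) i - (y : ∀ _ : ℤ, ℂ) i‖ < δ := by
  have := norm_apply_le (x - y) i
  rw [lp.coeFn_sub, Pi.sub_apply] at this
  linarith

lemma norm_esum_le (s : Finset ℤ) (c : ℤ → ℂ) (φ : ℤ → ℤ) {B : ℝ}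
    (h : ∀ j ∈ s, ‖c j‖ ≤ B) : ‖∑ j ∈ s, c j • e (φ j)‖ ≤ s.card * B := by
  refine (norm_sum_le _ _).trans ?_
  calc ∑ j ∈ s, ‖c j • e (φ j)‖ = ∑ j ∈ s, ‖c j‖ := by
        refine Finset.sum_congr rfl fun j _ => ?_
        rw [norm_smul, norm_e, mul_one]
    _ ≤ s.card * B := by
        refine le_trans (Finset.sum_le_card_nsmul s _ B h) (le_of_eq ?_)
        simp [nsmul_eq_mul]

/-- abstract form of condition (iv), in terms of pB -/
def Cond4pB (w : ℤ → ℝ) (m : ℕ) : Prop :=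
  ∀ q : ℕ, 0 < q → ∀ ε : ℝ, 0 < ε → ∃ n : ℕ, 0 < n ∧
    ∀ j : ℤ, |j| ≤ (q:ℤ) → ∀ l : ℕ, 1 ≤ l → l ≤ m →
      1 / ε < pB w (j + ((l*n : ℕ) : ℤ)) (l*n) ∧ pB w j (l*n) < ε

variable {w : ℤ → ℝ} {T : X →L[ℂ] X}

lemma key_estimate (hw_pos : ∀ n : ℤ, 0 < w n)
    (hT : ∀ n : ℤ, T (lp.single 2 n (1 : ℂ)) = (w n : ℂ) • lp.single 2 (n - 1) (1 : ℂ))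
    {q : ℕ} {ε : ℝ} (hε : 0 < ε) {N : ℕ} (hN : 2 * q < N)
    (x : X) (hx : ‖x - avec q‖ < ε / (1 + ε)) (hTx : ‖(T ^ N) x - avec q‖ < ε / (1 + ε))
    (j : ℤ) (hj : |j| ≤ (q:ℤ)) :
    1 / ε < pB w (j + N) N ∧ pB w j N < ε := by
  set δ := ε / (1 + ε) with hδ
  have hδ0 : 0 < δ := by positivity
  have hδ1 : δ < 1 := by
    rw [hδ, div_lt_one (by linarith)]; linarith
  have h1δ : 1 - δ = 1 / (1 + ε) := by
    rw [hδ]; field_simp; ring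
  -- coordinates of avec
  have hj' := abs_le.mp hj
  have haj : (avec q : ∀ _ : ℤ, ℂ) j = 1 := by rw [avec_apply, if_pos hj]
  have hajN : (avec q : ∀ _ : ℤ, ℂ) (j + N) = 0 := by
    rw [avec_apply, if_neg (by rw [abs_le]; push_neg; intro h'; omega)]
  have hajN' : (avec q : ∀ _ : ℤ, ℂ) (j - N) = 0 := by
    rw [avec_apply, if_neg (by rw [abs_le]; push_neg; intro h'; omega)]
  -- |x (j+N)| < δ
  have hxjN : ‖(x : ∀ _ : ℤ, ℂ) (j + N)‖ < δ := by
    have := coord_close hx (j + N); rwa [hajN, sub_zero] at this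
  -- |x j| ≥ 1 - δ
  have hxj : 1 - δ ≤ ‖(x : ∀ _ : ℤ, ℂ) j‖ := by
    have h := coord_close hx j; rw [haj] at h
    have := norm_sub_norm_le (1 : ℂ) ((x : ∀ _ : ℤ, ℂ) j)
    rw [norm_sub_rev] at this
    simp only [norm_one] at this
    linarith
  -- |(T^N x) j| ≥ 1 - δ
  have hTxj : 1 - δ ≤ ‖((T ^ N) x : ∀ _ : ℤ, ℂ) j‖ := by
    have h := coord_close hTx j; rw [haj] at h
    have := norm_sub_norm_le (1 : ℂ) (((T ^ N) x : ∀ _ : ℤ, ℂ) j)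
    rw [norm_sub_rev] at this
    simp only [norm_one] at this
    linarith
  -- |(T^N x) (j - N)| < δ
  have hTxjN : ‖((T ^ N) x : ∀ _ : ℤ, ℂ) (j - N)‖ < δ := by
    have := coord_close hTx (j - N); rwa [hajN', sub_zero] at this
  have hpB1 : 0 < pB w (j + N) N := pB_pos hw_pos _ _
  have hpB2 : 0 < pB w j N := pB_pos hw_pos _ _
  constructor
  · -- forward
    have hformula : ‖((T ^ N) x : ∀ _ : ℤ, ℂ) j‖
        = pB w (j + N) N * ‖(x : ∀ _ : ℤ, ℂ) (j + N)‖ := by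
      rw [Tpow_apply hT, norm_mul, Complex.norm_real, Real.norm_eq_abs,
        abs_of_pos hpB1]
    rw [hformula] at hTxj
    have hxpos : 0 < ‖(x : ∀ _ : ℤ, ℂ) (j + N)‖ := by
      by_contra hc
      push_neg at hc
      have : ‖(x : ∀ _ : ℤ, ℂ) (j + N)‖ = 0 := le_antisymm hc (norm_nonneg _)
      rw [this, mul_zero] at hTxj
      linarith
    have : (1 - δ) / δ < pB w (j + N) N := by
      rw [div_lt_iff₀ hδ0]
      calc 1 - δ ≤ pB w (j + N) N * ‖(x : ∀ _ : ℤ, ℂ) (j + N)‖ := hTxj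
        _ < pB w (j + N) N * δ := by
            exact mul_lt_mul_of_pos_left hxjN hpB1
    refine lt_of_le_of_lt (le_of_eq ?_) this
    rw [h1δ, hδ]
    rw [div_div_div_eq, one_mul]
    rw [← div_div, div_self (by linarith : (1:ℝ)+ε ≠ 0)]
  · -- backward
    have hformula : ‖((T ^ N) x : ∀ _ : ℤ, ℂ) (j - N)‖
        = pB w j N * ‖(x : ∀ _ : ℤ, ℂ) j‖ := by
      rw [Tpow_apply hT, show j - N + N = j by ring, norm_mul, Complex.norm_real,
        Real.norm_eq_abs, abs_of_pos hpB2]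
    rw [hformula] at hTxjN
    have : pB w j N * (1 - δ) < δ := by
      calc pB w j N * (1 - δ) ≤ pB w j N * ‖(x : ∀ _ : ℤ, ℂ) j‖ :=
            mul_le_mul_of_nonneg_left hxj (le_of_lt hpB2)
        _ < δ := hTxjN
    have h2 : pB w j N < δ / (1 - δ) := by
      rw [lt_div_iff₀ (by linarith)]
      linarith
    refine lt_of_lt_of_le h2 (le_of_eq ?_)
    rw [h1δ, hδ]
    field_simp

lemma Tpow_smul_e
    (hT : ∀ n : ℤ, T (lp.single 2 n (1 : ℂ)) = (w n : ℂ) • lp.single 2 (n - 1) (1 : ℂ))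
    (c : ℂ) (r : ℤ) (N : ℕ) : (T ^ N) (c • e r) = (c * (pB w r N : ℂ)) • e (r - N) := by
  rw [map_smul, Tpow_e hT, smul_smul]

/-- main construction: approximate `a` by a vector whose iterates approximate targets -/
lemma approx (hw_pos : ∀ n : ℤ, 0 < w n)
    (hT : ∀ n : ℤ, T (lp.single 2 n (1 : ℂ)) = (w n : ℂ) • lp.single 2 (n - 1) (1 : ℂ))
    (m : ℕ) (hm : 0 < m)
    (hC4 : ∀ q : ℕ, 0 < q → ∀ ε : ℝ, 0 < ε → ∃ n : ℕ, 0 < n ∧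
      ∀ j : ℤ, |j| ≤ (q:ℤ) → ∀ l : ℕ, 1 ≤ l → l ≤ m →
        1 / ε < pB w (j + ((l*n : ℕ) : ℤ)) (l*n) ∧ pB w j (l*n) < ε)
    (a : X) (y : Fin m → X) (ρ : ℝ) (hρ : 0 < ρ) :
    ∃ (z : X) (n : ℕ), 0 < n ∧ ‖z - a‖ < ρ ∧
      ∀ i : Fin m, ‖(T ^ (((i : ℕ) + 1) * n)) z - y i‖ < ρ := by
  classical
  -- choose window size q
  obtain ⟨qa, hqa⟩ := exists_trunc a (ρ/4) (by linarith)
  choose qf hqf using fun i : Fin m => exists_trunc (y i) (ρ/4) (by linarith)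
  set q : ℕ := max 1 (max qa (Finset.univ.sup qf)) with hqdef
  have hq : 0 < q := lt_of_lt_of_le one_pos (le_max_left _ _)
  have hqa' : qa ≤ q := le_trans (le_max_left _ _) (le_max_right _ _)
  have hqf' : ∀ i, qf i ≤ q := fun i =>
    le_trans (le_trans (Finset.le_sup (Finset.mem_univ i)) (le_max_right _ _))
      (le_max_right _ _)
  set s : Finset ℤ := Finset.Icc (-(q:ℤ)) q with hsdef
  have hmem_abs : ∀ j ∈ s, |j| ≤ (q:ℤ) := by
    intro j hj; rw [hsdef, Finset.mem_Icc] at hj; rw [abs_le]; exact hj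
  -- coefficient bound
  set R : ℝ := ‖a‖ + (∑ i : Fin m, ‖y i‖) + 1 with hRdef
  have hR0 : 0 < R := by
    have h1 : (0:ℝ) ≤ ‖a‖ := norm_nonneg _
    have h2 : (0:ℝ) ≤ ∑ i : Fin m, ‖y i‖ := Finset.sum_nonneg fun _ _ => norm_nonneg _
    rw [hRdef]; linarith
  have hRa : ∀ j : ℤ, ‖(a : ∀ _ : ℤ, ℂ) j‖ ≤ R := by
    intro j
    have h2 : (0:ℝ) ≤ ∑ i : Fin m, ‖y i‖ := Finset.sum_nonneg fun _ _ => norm_nonneg _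
    have := norm_apply_le a j; rw [hRdef]; linarith
  have hRy : ∀ (i : Fin m) (j : ℤ), ‖(y i : ∀ _ : ℤ, ℂ) j‖ ≤ R := by
    intro i j
    have h1 : ‖y i‖ ≤ ∑ i' : Fin m, ‖y i'‖ :=
      Finset.single_le_sum (f := fun i' => ‖y i'‖) (fun _ _ => norm_nonneg _)
        (Finset.mem_univ i)
    have := norm_apply_le (y i) j
    have h3 : (0:ℝ) ≤ ‖a‖ := norm_nonneg _
    rw [hRdef]; linarith
  -- epsilon
  set ε' : ℝ := ρ / (4 * (2*q+1) * R * (m+1)) with hε'def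
  have hε' : 0 < ε' := by rw [hε'def]; positivity
  obtain ⟨n, hn, hC⟩ := hC4 q hq ε' hε'
  -- pieces
  set tr : X → X := fun c => ∑ j ∈ s, ((c : ∀ _ : ℤ, ℂ) j) • e j with htrdef
  have htra : ‖a - tr a‖ < ρ/4 := hqa q hqa'
  have htry : ∀ i, ‖y i - tr (y i)‖ < ρ/4 := fun i => hqf i q (hqf' i)
  set bb : Fin m → X := fun i => ∑ j ∈ s,
      (((y i : ∀ _ : ℤ, ℂ) j) / ((pB w (j + ((((i:ℕ)+1)*n : ℕ) : ℤ)) (((i:ℕ)+1)*n) : ℝ) : ℂ))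
        • e (j + ((((i:ℕ)+1)*n : ℕ) : ℤ)) with hbbdef
  set z : X := tr a + ∑ i : Fin m, bb i with hzdef
  have hcard : (s.card : ℝ) = 2*q+1 := by
    rw [hsdef, Int.card_Icc]
    have h2 : ((q:ℤ) + 1 - -(q:ℤ)) = ((2*q+1 : ℕ) : ℤ) := by push_cast; ring
    rw [h2, Int.toNat_natCast]
    push_cast; ring
  have hBd : (s.card : ℝ) * (R * ε') = ρ / (4 * (m+1)) := by
    rw [hcard, hε'def]
    field_simp
  -- fact 1 : T^{(i+1)n} (bb i) = tr (y i)
  have fact1 : ∀ i : Fin m, (T ^ (((i:ℕ)+1)*n)) (bb i) = tr (y i) := by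
    intro i
    rw [hbbdef, map_sum]
    refine Finset.sum_congr rfl fun j hj => ?_
    rw [Tpow_smul_e hT]
    have hpos := pB_pos hw_pos (j + ((((i:ℕ)+1)*n : ℕ) : ℤ)) (((i:ℕ)+1)*n)
    rw [div_mul_cancel₀]
    · congr 1
      ring
    · exact_mod_cast hpos.ne'
  -- fact 4 : ‖bb i‖ small
  have fact4 : ∀ i : Fin m, ‖bb i‖ ≤ s.card * (R * ε') := by
    intro i
    rw [hbbdef]
    refine norm_esum_le s _ _ fun j hj => ?_
    have hC' := (hC j (hmem_abs j hj) ((i:ℕ)+1) (by omega) (by omega : (i:ℕ)+1 ≤ m)).1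
    have hpos := pB_pos hw_pos (j + ((((i:ℕ)+1)*n : ℕ) : ℤ)) (((i:ℕ)+1)*n)
    rw [norm_div, Complex.norm_real, Real.norm_eq_abs, abs_of_pos hpos]
    have h1ε : 1/ε' < pB w (j + ((((i:ℕ)+1)*n : ℕ) : ℤ)) (((i:ℕ)+1)*n) := hC'
    have hinv : 1 / pB w (j + ((((i:ℕ)+1)*n : ℕ) : ℤ)) (((i:ℕ)+1)*n) < ε' := by
      rw [div_lt_iff₀ hpos]
      rw [div_lt_iff₀ hε'] at h1ε
      nlinarith
    calc ‖(y i : ∀ _ : ℤ, ℂ) j‖ / pB w (j + ((((i:ℕ)+1)*n : ℕ) : ℤ)) (((i:ℕ)+1)*n)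
        ≤ R / pB w (j + ((((i:ℕ)+1)*n : ℕ) : ℤ)) (((i:ℕ)+1)*n) := by
          exact (div_le_div_iff_of_pos_right hpos).mpr (hRy i j)
      _ = R * (1 / pB w (j + ((((i:ℕ)+1)*n : ℕ) : ℤ)) (((i:ℕ)+1)*n)) := by ring
      _ ≤ R * ε' := mul_le_mul_of_nonneg_left hinv.le hR0.le
  -- helper for division bound
  have div_bound : ∀ (A p : ℝ), 0 ≤ A → A ≤ R → 0 < p → 1/ε' < p → A / p ≤ R * ε' := by
    intro A p hA0 hAR hp h1p
    have hinv : 1 / p < ε' := by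
      rw [div_lt_iff₀ hp]
      rw [div_lt_iff₀ hε'] at h1p
      nlinarith
    calc A / p = A * (1/p) := by ring
      _ ≤ R * ε' := by
          refine mul_le_mul hAR hinv.le (by positivity) hR0.le
  -- fact 2 : cross terms are small
  have fact2 : ∀ i i' : Fin m, i' ≠ i →
      ‖(T ^ (((i':ℕ)+1)*n)) (bb i)‖ ≤ s.card * (R * ε') := by
    intro i i' hne
    set N : ℕ := ((i:ℕ)+1)*n with hN
    set N' : ℕ := ((i':ℕ)+1)*n with hN'
    rw [hbbdef, map_sum]
    have hterm : ∀ j ∈ s,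
        (T ^ N') ((((y i : ∀ _ : ℤ, ℂ) j) / ((pB w (j + (N:ℤ)) N : ℝ) : ℂ)) • e (j + (N:ℤ)))
        = ((((y i : ∀ _ : ℤ, ℂ) j) / ((pB w (j + (N:ℤ)) N : ℝ) : ℂ))
            * ((pB w (j + (N:ℤ)) N' : ℝ) : ℂ)) • e (j + (N:ℤ) - (N':ℤ)) := by
      intro j _
      rw [Tpow_smul_e hT]
    rw [Finset.sum_congr rfl hterm]
    refine norm_esum_le s _ _ fun j hj => ?_
    have hjabs := hmem_abs j hj
    have hp1 := pB_pos hw_pos (j + (N:ℤ)) N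
    have hp2 := pB_pos hw_pos (j + (N:ℤ)) N'
    rw [norm_mul, norm_div, Complex.norm_real, Complex.norm_real, Real.norm_eq_abs,
      Real.norm_eq_abs, abs_of_pos hp1, abs_of_pos hp2]
    have hii' : (i':ℕ) ≠ (i:ℕ) := fun h => hne (Fin.ext h)
    rcases hii'.lt_or_gt with hlt | hlt
    · -- i' < i : forward products
      set B : ℕ := ((i:ℕ) - i')*n with hB
      have hNsplit : N = N' + B := by rw [hN, hN', hB]; rw [← Nat.add_mul]; congr 1; omega
      have hsplit : pB w (j + (N:ℤ)) N = pB w (j + (N:ℤ)) N' * pB w (j + (B:ℤ)) B := by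
        have h0 : pB w (j + (N:ℤ)) N = pB w (j + (N:ℤ)) (N' + B) := by rw [← hNsplit]
        rw [h0, pB_add]
        have base : j + (N:ℤ) - (N':ℤ) = j + (B:ℤ) := by omega
        rw [base]
      rw [hsplit]
      have hq2 := pB_pos hw_pos (j + (B:ℤ)) B
      have heq : ‖(y i : ∀ _ : ℤ, ℂ) j‖ / (pB w (j + (N:ℤ)) N' * pB w (j + (B:ℤ)) B)
          * pB w (j + (N:ℤ)) N' = ‖(y i : ∀ _ : ℤ, ℂ) j‖ / pB w (j + (B:ℤ)) B := by
        field_simp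
      rw [heq]
      have hCf := (hC j hjabs ((i:ℕ) - i') (by omega) (by omega)).1
      exact div_bound _ _ (norm_nonneg _) (hRy i j) hq2 hCf
    · -- i' > i : backward products
      set B : ℕ := ((i':ℕ) - i)*n with hB
      have hNsplit : N' = N + B := by rw [hN, hN', hB]; rw [← Nat.add_mul]; congr 1; omega
      have hsplit : pB w (j + (N:ℤ)) N' = pB w (j + (N:ℤ)) N * pB w j B := by
        have h0 : pB w (j + (N:ℤ)) N' = pB w (j + (N:ℤ)) (N + B) := by rw [← hNsplit]
        rw [h0, pB_add]
        have base : j + (N:ℤ) - (N:ℤ) = j := by omega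
        rw [base]
      rw [hsplit]
      have heq : ‖(y i : ∀ _ : ℤ, ℂ) j‖ / pB w (j + (N:ℤ)) N
          * (pB w (j + (N:ℤ)) N * pB w j B) = ‖(y i : ∀ _ : ℤ, ℂ) j‖ * pB w j B := by
        field_simp
      rw [heq]
      have hCb := (hC j hjabs ((i':ℕ) - i) (by omega) (by omega)).2
      have hq2 := pB_pos hw_pos j B
      refine mul_le_mul (hRy i j) hCb.le hq2.le hR0.le
  -- fact 3 : backward shift of the truncated base point is small
  have fact3 : ∀ i' : Fin m, ‖(T ^ (((i':ℕ)+1)*n)) (tr a)‖ ≤ s.card * (R * ε') := by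
    intro i'
    set N' : ℕ := ((i':ℕ)+1)*n with hN'
    rw [htrdef, map_sum]
    have hterm : ∀ j ∈ s, (T ^ N') (((a : ∀ _ : ℤ, ℂ) j) • e j)
        = (((a : ∀ _ : ℤ, ℂ) j) * ((pB w j N' : ℝ) : ℂ)) • e (j - (N':ℤ)) := by
      intro j _; rw [Tpow_smul_e hT]
    rw [Finset.sum_congr rfl hterm]
    refine norm_esum_le s _ _ fun j hj => ?_
    have hCb := (hC j (hmem_abs j hj) ((i':ℕ)+1) (by omega) (by omega)).2
    have hp := pB_pos hw_pos j N'
    rw [norm_mul, Complex.norm_real, Real.norm_eq_abs, abs_of_pos hp]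
    exact mul_le_mul (hRa j) hCb.le hp.le hR0.le
  -- arithmetic
  have hbound0 : (0:ℝ) ≤ s.card * (R * ε') := by positivity
  have harith : (m:ℝ) * ((s.card : ℝ) * (R * ε')) ≤ ρ/4 := by
    rw [hBd]
    rw [mul_div_assoc']
    rw [div_le_div_iff₀ (by positivity) (by norm_num)]
    nlinarith [hρ, Nat.cast_nonneg (α := ℝ) m]
  have hsum_bb : ‖∑ i : Fin m, bb i‖ ≤ (m:ℝ) * (s.card * (R * ε')) := by
    refine le_trans (norm_sum_le _ _) ?_
    refine le_trans (Finset.sum_le_card_nsmul _ _ _ fun i _ => fact4 i) (le_of_eq ?_)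
    simp [nsmul_eq_mul]
  refine ⟨z, n, hn, ?_, ?_⟩
  · -- ‖z - a‖ < ρ
    have h1 : z - a = (tr a - a) + ∑ i : Fin m, bb i := by rw [hzdef]; abel
    rw [h1]
    refine lt_of_le_of_lt (norm_add_le _ _) ?_
    have e1 : ‖tr a - a‖ < ρ/4 := by rw [← norm_neg, neg_sub]; exact htra
    have e2 := le_trans hsum_bb harith
    linarith [e1, e2, hρ]
  · -- iterates
    intro i
    set N : ℕ := ((i:ℕ)+1)*n with hN
    have hdecomp : (T ^ N) z - y i
        = (T ^ N) (tr a) + ((tr (y i) - y i) + ∑ i' ∈ Finset.univ.erase i, (T ^ N) (bb i')) := by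
      have f1 : (T ^ N) (bb i) = tr (y i) := fact1 i
      have h2 : (T ^ N) z = (T ^ N) (tr a)
          + (tr (y i) + ∑ i' ∈ Finset.univ.erase i, (T ^ N) (bb i')) := by
        rw [hzdef, map_add]
        congr 1
        rw [map_sum, ← f1]
        exact (Finset.add_sum_erase _ (fun i' => (T ^ N) (bb i')) (Finset.mem_univ i)).symm
      rw [h2]
      abel
    rw [hdecomp]
    have herase : ‖∑ i' ∈ Finset.univ.erase i, (T ^ N) (bb i')‖
        ≤ ((m:ℝ) - 1) * (s.card * (R * ε')) := by
      refine le_trans (norm_sum_le _ _) ?_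
      refine le_trans (Finset.sum_le_card_nsmul _ _ _ fun i' hi' =>
        fact2 i' i (Finset.ne_of_mem_erase hi').symm) (le_of_eq ?_)
      rw [Finset.card_erase_of_mem (Finset.mem_univ i)]
      simp only [nsmul_eq_mul, Finset.card_univ, Fintype.card_fin]
      congr 1
      push_cast [Nat.cast_sub hm]
      ring
    refine lt_of_le_of_lt (norm_add_le _ _) (lt_of_le_of_lt
      (add_le_add (fact3 i) (norm_add_le _ _)) ?_)
    rw [← norm_neg (tr (y i) - y i), neg_sub]
    have := htry i
    have hcast : (s.card : ℝ) * (R * ε') + (((m:ℝ) - 1) * (s.card * (R * ε')))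
        = (m:ℝ) * (s.card * (R * ε')) := by ring
    nlinarith [harith, hρ]

lemma c1_to_c4 (hw_pos : ∀ n : ℤ, 0 < w n)
    (hT : ∀ n : ℤ, T (lp.single 2 n (1 : ℂ)) = (w n : ℂ) • lp.single 2 (n - 1) (1 : ℂ))
    (h1 : TopMultiplyRecurrent T) (m : ℕ) (hm : 0 < m) : Cond4pB w m := by
  intro q hq ε hε
  set δ := ε / (1 + ε) with hδ
  have hδ0 : 0 < δ := by positivity
  set M := (2*q+1) * m with hM
  obtain ⟨k, hk, x, hx⟩ := h1 (Metric.ball (avec q) δ) Metric.isOpen_ball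
    ⟨avec q, Metric.mem_ball_self hδ0⟩ M (by positivity)
  simp only [Set.mem_iInter, Set.mem_preimage, Finset.mem_range] at hx
  set l₀ := 2*q/k + 1 with hl₀
  set n := l₀ * k with hn
  have hn0 : 0 < n := by positivity
  have hn2q : 2*q < n := by
    rw [hn, hl₀]
    calc 2*q < (2*q/k + 1) * k := by
          have h2 := Nat.div_add_mod (2*q) k
          have h3 := Nat.mod_lt (2*q) hk
          nlinarith [h2, h3]
      _ = (2*q/k + 1) * k := rfl
  have hl₀le : l₀ ≤ 2*q+1 := by
    rw [hl₀]
    have := Nat.div_le_self (2*q) k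
    omega
  refine ⟨n, hn0, fun j hj l hl1 hlm => ?_⟩
  have hidx : l * l₀ < M + 1 := by
    have h2 : l * l₀ ≤ m * (2*q+1) := Nat.mul_le_mul hlm hl₀le
    have h3 : m * (2*q+1) = M := by rw [hM, mul_comm]
    omega
  have hx0 : x ∈ Metric.ball (avec q) δ := by
    have := hx 0 (by omega)
    simpa using this
  have hxl : (T ^ (l * n)) x ∈ Metric.ball (avec q) δ := by
    have := hx (l * l₀) hidx
    have heq : l * l₀ * k = l * n := by rw [hn]; ring
    rwa [heq] at this
  rw [Metric.mem_ball, dist_eq_norm] at hx0 hxl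
  have hN : 2*q < l*n := le_trans (Nat.succ_le_of_lt hn2q) (Nat.le_mul_of_pos_left _ hl1)
  exact key_estimate hw_pos hT hε hN x hx0 hxl j hj

lemma c2_to_c4 (hw_pos : ∀ n : ℤ, 0 < w n)
    (hT : ∀ n : ℤ, T (lp.single 2 n (1 : ℂ)) = (w n : ℂ) • lp.single 2 (n - 1) (1 : ℂ))
    (m : ℕ) (hm : 0 < m)
    (v : Fin m → X)
    (hv : Dense (Set.range fun n : ℕ => ((directSumPowers T m) ^ n) v)) :
    Cond4pB w m := by
  intro q hq ε hε
  set δ := ε / (1 + ε) with hδ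
  have hδ0 : 0 < δ := by positivity
  haveI : Nontrivial (Fin m → X) := by
    refine ⟨(fun _ => e 0), 0, fun h => ?_⟩
    have h0 : (0:ℕ) < m := hm
    have := congrFun h ⟨0, h0⟩
    rw [Pi.zero_apply] at this
    exact (one_ne_zero (α := ℂ)) (by
      have := congrArg (fun (x : X) => (x : ∀ _ : ℤ, ℂ) 0) this
      simpa [e, lp.single_apply_self] using this)
  set A : Fin m → X := fun _ => avec q with hA
  -- first visit
  have hv' : DenseRange (fun n : ℕ => ((directSumPowers T m) ^ n) v) := hv
  obtain ⟨n₁, hn₁⟩ := hv'.exists_dist_lt A hδ0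
  -- second (late) visit
  have htail := dense_tail hv (n₁ + 2*q + 1)
  have htail' : DenseRange (fun n : ℕ => ((directSumPowers T m) ^ (n + (n₁ + 2*q + 1))) v) :=
    htail
  obtain ⟨n₂', hn₂⟩ := htail'.exists_dist_lt A hδ0
  set n₂ := n₂' + (n₁ + 2*q + 1) with hn₂def
  set n := n₂ - n₁ with hndef
  have hn2q : 2*q < n := by omega
  have hn0 : 0 < n := by omega
  refine ⟨n, hn0, fun j hj l hl1 hlm => ?_⟩
  have hlm' : l - 1 < m := by omega
  set i : Fin m := ⟨l - 1, hlm'⟩ with hi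
  have hival : (i:ℕ) + 1 = l := by rw [hi]; simp; omega
  set x : X := ((directSumPowers T m) ^ n₁) v i with hx
  have hx0 : ‖x - avec q‖ < δ := by
    have h1 : dist (((directSumPowers T m) ^ n₁) v) A < δ := by
      rw [dist_comm] at hn₁; exact hn₁
    have h2 := norm_le_pi_norm ((((directSumPowers T m) ^ n₁) v) - A) i
    rw [dist_eq_norm] at h1
    rw [Pi.sub_apply] at h2
    calc ‖x - avec q‖ = ‖(((directSumPowers T m) ^ n₁) v) i - A i‖ := by rw [hx, hA]
      _ ≤ ‖(((directSumPowers T m) ^ n₁) v) - A‖ := h2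
      _ < δ := h1
  have hxl : ‖(T ^ (l * n)) x - avec q‖ < δ := by
    have h1 : dist (((directSumPowers T m) ^ n₂) v) A < δ := by
      rw [dist_comm] at hn₂
      exact hn₂
    have h2 := norm_le_pi_norm ((((directSumPowers T m) ^ n₂) v) - A) i
    rw [dist_eq_norm] at h1
    rw [Pi.sub_apply] at h2
    have hxeq : (T ^ (l * n)) x = (((directSumPowers T m) ^ n₂) v) i := by
      rw [hx, directSumPowers_pow_apply, directSumPowers_pow_apply]
      rw [← ContinuousLinearMap.mul_apply, ← pow_add]
      congr 2
      rw [hival]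
      have : n + n₁ = n₂ := by omega
      calc l * n + l * n₁ = l * (n + n₁) := by ring
        _ = l * n₂ := by rw [this]
    calc ‖(T ^ (l * n)) x - avec q‖ = ‖(((directSumPowers T m) ^ n₂) v) i - A i‖ := by
          rw [hxeq, hA]
      _ ≤ ‖(((directSumPowers T m) ^ n₂) v) - A‖ := h2
      _ < δ := h1
  have hN : 2*q < l*n := le_trans (Nat.succ_le_of_lt hn2q) (Nat.le_mul_of_pos_left _ hl1)
  exact key_estimate hw_pos hT hε hN x hx0 hxl j hj

lemma c4_to_c3 (hw_pos : ∀ n : ℤ, 0 < w n)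
    (hT : ∀ n : ℤ, T (lp.single 2 n (1 : ℂ)) = (w n : ℂ) • lp.single 2 (n - 1) (1 : ℂ))
    (m : ℕ) (hm : 0 < m) (h4 : Cond4pB w m) :
    Dense {x : X | Dense (Set.range fun n : ℕ =>
      fun i : Fin m => (T ^ (((i : ℕ) + 1) * n)) x)} := by
  obtain ⟨u, hu⟩ := TopologicalSpace.exists_dense_seq (Fin m → X)
  set G : ℕ × ℕ → Set X := fun p => ⋃ n : ℕ, ⋂ i : Fin m,
    (T ^ (((i:ℕ)+1)*n)) ⁻¹' Metric.ball (u p.1 i) (1/(p.2+1)) with hG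
  have hGopen : ∀ p, IsOpen (G p) := by
    intro p
    refine isOpen_iUnion fun n => isOpen_iInter_of_finite fun i => ?_
    exact Metric.isOpen_ball.preimage (T ^ (((i:ℕ)+1)*n)).continuous
  have hGdense : ∀ p, Dense (G p) := by
    intro p
    rw [Metric.dense_iff]
    intro a ρ hρ
    have hρ' : 0 < min ρ (1/((p.2:ℝ)+1)) := lt_min hρ (by positivity)
    obtain ⟨z, n, hn, hza, hit⟩ := approx hw_pos hT m hm h4 a (u p.1) _ hρ'
    refine ⟨z, ?_, ?_⟩
    · rw [Metric.mem_ball, dist_eq_norm]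
      exact lt_of_lt_of_le hza (min_le_left _ _)
    · rw [hG]
      refine Set.mem_iUnion.mpr ⟨n, Set.mem_iInter.mpr fun i => ?_⟩
      rw [Set.mem_preimage, Metric.mem_ball, dist_eq_norm]
      exact lt_of_lt_of_le (hit i) (min_le_right _ _)
  have hBaire : Dense (⋂ p : ℕ × ℕ, G p) := dense_iInter_of_isOpen hGopen hGdense
  refine hBaire.mono fun x hx => ?_
  rw [Set.mem_iInter] at hx
  rw [Set.mem_setOf_eq, Metric.dense_iff]
  intro g ρ hρ
  obtain ⟨r, hr⟩ := exists_nat_one_div_lt (show (0:ℝ) < ρ/2 by linarith)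
  obtain ⟨k, hk⟩ := hu.exists_dist_lt g (show (0:ℝ) < ρ/2 by linarith)
  have hxG := hx (k, r)
  rw [hG] at hxG
  obtain ⟨n, hn⟩ := Set.mem_iUnion.mp hxG
  rw [Set.mem_iInter] at hn
  refine ⟨(fun i : Fin m => (T ^ (((i:ℕ)+1)*n)) x), ?_, Set.mem_range_self n⟩
  rw [Metric.mem_ball]
  have h1 : dist (fun i : Fin m => (T ^ (((i:ℕ)+1)*n)) x) (u k) ≤ 1/((r:ℝ)+1) := by
    rw [dist_pi_le_iff (by positivity)]
    intro i
    have := hn i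
    rw [Set.mem_preimage, Metric.mem_ball] at this
    exact this.le
  calc dist (fun i : Fin m => (T ^ (((i:ℕ)+1)*n)) x) g
      ≤ dist (fun i : Fin m => (T ^ (((i:ℕ)+1)*n)) x) (u k) + dist (u k) g := dist_triangle _ _ _
    _ ≤ 1/((r:ℝ)+1) + dist (u k) g := by linarith
    _ < ρ/2 + ρ/2 := by
        rw [dist_comm] at hk
        push_cast at hr ⊢
        linarith
    _ = ρ := by ring

lemma c3_to_c1
    (h3 : ∀ m : ℕ, 0 < m → Dense {x : X | Dense (Set.range fun n : ℕ =>
      fun i : Fin m => (T ^ (((i : ℕ) + 1) * n)) x)}) :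
    TopMultiplyRecurrent T := by
  intro U hU hne m hm
  obtain ⟨x, hxmem, hxU⟩ := (h3 m hm).exists_mem_open hU hne
  rw [Set.mem_setOf_eq] at hxmem
  haveI : Nontrivial (Fin m → X) := by
    refine ⟨(fun _ => e 0), 0, fun h => ?_⟩
    have := congrFun h ⟨0, hm⟩
    rw [Pi.zero_apply] at this
    exact (one_ne_zero (α := ℂ)) (by
      have := congrArg (fun (x : X) => (x : ∀ _ : ℤ, ℂ) 0) this
      simpa [e, lp.single_apply_self] using this)
  have htail := dense_tail hxmem 1
  have hVopen : IsOpen {g : Fin m → X | ∀ i, g i ∈ U} := by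
    have : {g : Fin m → X | ∀ i, g i ∈ U} = Set.univ.pi (fun _ : Fin m => U) := by
      ext g; simp [Set.mem_pi]
    rw [this]
    exact isOpen_set_pi Set.finite_univ fun _ _ => hU
  have hVne : {g : Fin m → X | ∀ i, g i ∈ U}.Nonempty := ⟨fun _ => x, fun _ => hxU⟩
  obtain ⟨gg, hgg, hgmem⟩ := htail.exists_mem_open hVopen hVne
  obtain ⟨n, hn⟩ := hgg
  refine ⟨n + 1, Nat.succ_pos n, x, ?_⟩
  simp only [Set.mem_iInter, Set.mem_preimage, Finset.mem_range]
  intro jj hjj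
  rcases Nat.eq_zero_or_pos jj with h0 | hpos
  · subst h0; simpa using hxU
  · have hij : jj - 1 < m := by omega
    have := hgmem ⟨jj - 1, hij⟩
    rw [← hn] at this
    have heq : ((jj - 1 : ℕ) + 1) * (n + 1) = jj * (n + 1) := by
      congr 1; omega
    simpa [heq] using this

lemma c3_to_c2 (m : ℕ) (hm : 0 < m)
    (h3 : Dense {x : X | Dense (Set.range fun n : ℕ =>
      fun i : Fin m => (T ^ (((i : ℕ) + 1) * n)) x)}) :
    ∃ v : Fin m → X, Dense (Set.range fun n : ℕ => ((directSumPowers T m) ^ n) v) := by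
  obtain ⟨x, hx⟩ := h3.nonempty
  rw [Set.mem_setOf_eq] at hx
  refine ⟨fun _ => x, ?_⟩
  have : (fun n : ℕ => ((directSumPowers T m) ^ n) (fun _ => x))
      = fun n : ℕ => fun i : Fin m => (T ^ (((i : ℕ) + 1) * n)) x := by
    funext n
    funext i
    rw [directSumPowers_pow_apply]
  rw [this]
  exact hx


/-- bridge between `Cond4pB` and the explicit product form -/
lemma cond4_bridge (w : ℤ → ℝ) (m : ℕ) :
    Cond4pB w m ↔
      ∀ q : ℕ, 0 < q → ∀ ε : ℝ, 0 < ε →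
        ∃ n : ℕ, 0 < n ∧ ∀ j : ℤ, |j| ≤ (q : ℤ) → ∀ l : ℕ, 1 ≤ l → l ≤ m →
          (1 / ε < ∏ i ∈ Finset.Icc 1 (l * n), w (j + (i : ℤ))) ∧
          (∏ i ∈ Finset.range (l * n), w (j - (i : ℤ)) < ε) := by
  constructor
  · intro h q hq ε hε
    obtain ⟨n, hn, hh⟩ := h q hq ε hε
    refine ⟨n, hn, fun j hj l hl1 hlm => ?_⟩
    obtain ⟨h1, h2⟩ := hh j hj l hl1 hlm
    rw [pB_eq_forward] at h1
    exact ⟨h1, h2⟩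
  · intro h q hq ε hε
    obtain ⟨n, hn, hh⟩ := h q hq ε hε
    refine ⟨n, hn, fun j hj l hl1 hlm => ?_⟩
    obtain ⟨h1, h2⟩ := hh j hj l hl1 hlm
    rw [← pB_eq_forward] at h1
    exact ⟨h1, h2⟩

end Stmt10Aux
end

open Stmt10Aux in
theorem stmt10
    (w : ℤ → ℝ) (hw_pos : ∀ n : ℤ, 0 < w n) (hw_bdd : ∃ C : ℝ, ∀ n : ℤ, w n ≤ C)
    (T : lp (fun _ : ℤ => ℂ) 2 →L[ℂ] lp (fun _ : ℤ => ℂ) 2)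
    (hT : ∀ n : ℤ, T (lp.single 2 n (1 : ℂ)) = (w n : ℂ) • lp.single 2 (n - 1) (1 : ℂ)) :
    -- (i) ↔ (ii)
    ((TopMultiplyRecurrent T ↔
      ∀ m : ℕ, 0 < m →
        ∃ v : Fin m → lp (fun _ : ℤ => ℂ) 2,
          Dense (Set.range fun n : ℕ => ((directSumPowers T m) ^ n) v)) ∧
    -- (i) ↔ (iii)
    (TopMultiplyRecurrent T ↔
      ∀ m : ℕ, 0 < m →
        Dense {x : lp (fun _ : ℤ => ℂ) 2 |
          Dense (Set.range fun n : ℕ =>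
            fun i : Fin m => (T ^ (((i : ℕ) + 1) * n)) x)}) ∧
    -- (i) ↔ (iv)
    (TopMultiplyRecurrent T ↔
      ∀ m q : ℕ, 0 < m → 0 < q → ∀ ε : ℝ, 0 < ε →
        ∃ n : ℕ, 0 < n ∧ ∀ j : ℤ, |j| ≤ (q : ℤ) → ∀ l : ℕ, 1 ≤ l → l ≤ m →
          (1 / ε < ∏ i ∈ Finset.Icc 1 (l * n), w (j + (i : ℤ))) ∧
          (∏ i ∈ Finset.range (l * n), w (j - (i : ℤ)) < ε))) := by
  have h13 : TopMultiplyRecurrent T →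
      ∀ m : ℕ, 0 < m → Dense {x : lp (fun _ : ℤ => ℂ) 2 |
        Dense (Set.range fun n : ℕ => fun i : Fin m => (T ^ (((i : ℕ) + 1) * n)) x)} :=
    fun h m hm => c4_to_c3 hw_pos hT m hm (c1_to_c4 hw_pos hT h m hm)
  have h31 : (∀ m : ℕ, 0 < m → Dense {x : lp (fun _ : ℤ => ℂ) 2 |
      Dense (Set.range fun n : ℕ => fun i : Fin m => (T ^ (((i : ℕ) + 1) * n)) x)}) →
      TopMultiplyRecurrent T := c3_to_c1
  refine ⟨⟨fun h m hm => c3_to_c2 m hm (h13 h m hm), fun h2 => ?_⟩,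
    ⟨h13, h31⟩, ⟨fun h => ?_, fun h4 => ?_⟩⟩
  · -- (ii) → (i)
    refine h31 fun m hm => ?_
    obtain ⟨v, hv⟩ := h2 m hm
    exact c4_to_c3 hw_pos hT m hm (c2_to_c4 hw_pos hT m hm v hv)
  · -- (i) → (iv)
    intro m q hm hq ε hε
    exact (cond4_bridge w m).mp (c1_to_c4 hw_pos hT h m hm) q hq ε hε
  · -- (iv) → (i)
    refine h31 fun m hm => ?_
    refine c4_to_c3 hw_pos hT m hm ?_
    rw [cond4_bridge w m]
    intro q hq ε hε
    exact h4 m q hm hq ε hε
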